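/- In the n-projective model structure on Ch(R), a chain map is a weak equivalence if and only if it is a quasi-isomorphism. More precisely: in an abelian model structure on Ch(R) whose trivial objects are exactly the exact complexes, a map f factoring as a trivial fibration after a trivial cofibration induces an isomorphism on all homology groups, and conversely every quasi-isomorphism is such a composite. -/

import Mathlib

/-!
A trivial cofibration `i : X ⟶ W` sits in a short exact sequence `0 → X → W → coker i → 0`
with exact cokernel, and a trivial fibration `p : W ⟶ Y` in `0 → ker p → W → Y → 0` with exact
kernel; the long exact homology sequence makes both of them quasi-isomorphisms. Conversely,
factor a quasi-isomorphism as `f = i ≫ p` with `i` a trivial cofibration and `p` a fibration: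
by two-out-of-three `p` is a quasi-isomorphism, so the same long exact sequence shows that
`ker p` is exact, i.e. `p` is a trivial fibration.
-/

open CategoryTheory Limits

variable (R : Type) [Ring R]

/-- `f` is a trivial cofibration for an abelian model structure on `Ch(R)` with class of
cofibrant objects `𝒞` and exact complexes as trivial objects: a monomorphism whose
cokernel is cofibrant and exact. -/
def IsTrivialCofibration (𝒞 : ChainComplex (ModuleCat R) ℤ → Prop)
    {X Y : ChainComplex (ModuleCat R) ℤ} (f : X ⟶ Y) : Prop :=
  Mono f ∧ (∀ k : ℤ, (cokernel f).ExactAt k) ∧ 𝒞 (cokernel f)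

/-- `f` is a fibration: an epimorphism whose kernel is fibrant (`ℱ`). -/
def IsFibration (ℱ : ChainComplex (ModuleCat R) ℤ → Prop)
    {X Y : ChainComplex (ModuleCat R) ℤ} (f : X ⟶ Y) : Prop :=
  Epi f ∧ ℱ (kernel f)

/-- `f` is a trivial fibration: an epimorphism whose kernel is fibrant and exact. -/
def IsTrivialFibration (ℱ : ChainComplex (ModuleCat R) ℤ → Prop)
    {X Y : ChainComplex (ModuleCat R) ℤ} (f : X ⟶ Y) : Prop :=
  Epi f ∧ (∀ k : ℤ, (kernel f).ExactAt k) ∧ ℱ (kernel f)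

namespace CategoryTheory.ShortComplex

variable {C : Type*} [Category* C] [Abelian C]

lemma shortExact_cokernel {X Y : C} (f : X ⟶ Y) [Mono f] :
    (ShortComplex.mk f (cokernel.π f) (cokernel.condition f)).ShortExact where
  exact := exact_cokernel f

lemma shortExact_kernel {X Y : C} (f : X ⟶ Y) [Epi f] :
    (ShortComplex.mk (kernel.ι f) f (kernel.condition f)).ShortExact where
  exact := exact_kernel f

namespace ShortExact

variable {ι : Type*} {c : ComplexShape ι} {S : ShortComplex (HomologicalComplex C c)}

lemma quasiIso_f (hS : S.ShortExact) (h₃ : S.X₃.Acyclic) : _root_.QuasiIso S.f := by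
  have hz (k : ι) : IsZero (S.X₃.homology k) := (S.X₃.exactAt_iff_isZero_homology k).1 (h₃ k)
  refine ⟨fun j ↦ ?_⟩
  rw [quasiIsoAt_iff_isIso_homologyMap]
  have : Mono (HomologicalComplex.homologyMap S.f j) := by
    by_cases! hj : ∃ i, c.Rel i j
    · obtain ⟨i, hij⟩ := hj
      exact (hS.homology_exact₁ i j hij).mono_g ((hz i).eq_of_src _ _)
    · have := hS.mono_f
      exact HomologicalComplex.mono_homologyMap_of_mono_of_not_rel S.f j hj
  have : Epi (HomologicalComplex.homologyMap S.f j) :=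
    (hS.homology_exact₂ j).epi_f ((hz j).eq_of_tgt _ _)
  exact isIso_of_mono_of_epi _

lemma quasiIso_g (hS : S.ShortExact) (h₁ : S.X₁.Acyclic) : _root_.QuasiIso S.g := by
  have hz (k : ι) : IsZero (S.X₁.homology k) := (S.X₁.exactAt_iff_isZero_homology k).1 (h₁ k)
  refine ⟨fun i ↦ ?_⟩
  rw [quasiIsoAt_iff_isIso_homologyMap]
  have : Mono (HomologicalComplex.homologyMap S.g i) :=
    (hS.homology_exact₂ i).mono_g ((hz i).eq_of_src _ _)
  have : Epi (HomologicalComplex.homologyMap S.g i) := by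
    by_cases! hi : ∃ j, c.Rel i j
    · obtain ⟨j, hij⟩ := hi
      exact (hS.homology_exact₃ i j hij).epi_f ((hz j).eq_of_tgt _ _)
    · have := hS.epi_g
      exact HomologicalComplex.epi_homologyMap_of_epi_of_not_rel S.g i hi
  exact isIso_of_mono_of_epi _

end ShortExact

end CategoryTheory.ShortComplex

section ModelStructure

variable {R}

lemma IsTrivialCofibration.quasiIso {𝒞 : ChainComplex (ModuleCat R) ℤ → Prop}
    {X Y : ChainComplex (ModuleCat R) ℤ} {f : X ⟶ Y} (hf : IsTrivialCofibration R 𝒞 f) :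
    QuasiIso f :=
  have := hf.1
  (ShortComplex.shortExact_cokernel f).quasiIso_f hf.2.1

lemma IsTrivialFibration.quasiIso {ℱ : ChainComplex (ModuleCat R) ℤ → Prop}
    {X Y : ChainComplex (ModuleCat R) ℤ} {f : X ⟶ Y} (hf : IsTrivialFibration R ℱ f) :
    QuasiIso f :=
  have := hf.1
  (ShortComplex.shortExact_kernel f).quasiIso_g hf.2.1

lemma IsFibration.isTrivialFibration {ℱ : ChainComplex (ModuleCat R) ℤ → Prop}
    {X Y : ChainComplex (ModuleCat R) ℤ} {f : X ⟶ Y} (hf : IsFibration R ℱ f) [QuasiIso f] :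
    IsTrivialFibration R ℱ f :=
  have := hf.1
  ⟨hf.1, (ShortComplex.shortExact_kernel f).acyclic_X₁ ‹_›, hf.2⟩

end ModelStructure

/-- In an abelian model structure on `Ch(R)` whose trivial objects are exactly the exact
complexes (such as the `n`-projective model structure) — with cofibrant objects `𝒞`,
fibrant objects `ℱ`, and in which every map factors as a trivial cofibration followed by
a fibration — the weak equivalences (composites of a trivial cofibration followed by a
trivial fibration) are exactly the quasi-isomorphisms. -/
theorem weakEquiv_iff_quasiIso (𝒞 ℱ : ChainComplex (ModuleCat R) ℤ → Prop)
    (hfact : ∀ {X Y : ChainComplex (ModuleCat R) ℤ} (f : X ⟶ Y),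
      ∃ (W : ChainComplex (ModuleCat R) ℤ) (i : X ⟶ W) (p : W ⟶ Y),
        f = i ≫ p ∧ IsTrivialCofibration R 𝒞 i ∧ IsFibration R ℱ p)
    {X Y : ChainComplex (ModuleCat R) ℤ} (f : X ⟶ Y) :
    QuasiIso f ↔ ∃ (W : ChainComplex (ModuleCat R) ℤ) (i : X ⟶ W) (p : W ⟶ Y),
      f = i ≫ p ∧ IsTrivialCofibration R 𝒞 i ∧ IsTrivialFibration R ℱ p := by
  constructor
  · intro hf
    obtain ⟨W, i, p, rfl, hi, hp⟩ := hfact f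
    have := hi.quasiIso
    have : QuasiIso p := quasiIso_of_comp_left i p
    exact ⟨W, i, p, rfl, hi, hp.isTrivialFibration⟩
  · rintro ⟨W, i, p, rfl, hi, hp⟩
    have := hi.quasiIso
    have := hp.quasiIso
    infer_instance
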